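/- (Permutation invariance of the infinite natural sum, used in Proposition 11(3) of the paper) For every sequence (γ_i)_{i∈ℕ} of ordinals and every bijection p : ℕ → ℕ, ∑#_{i∈ℕ} γ_i = ∑#_{i∈ℕ} γ_{p(i)}. -/

import Mathlib

/-- Natural addition on ordinals (removed from Mathlib; restored with its Mathlib definition of
December 2024). -/
noncomputable def Ordinal.nadd.{u} (a b : Ordinal.{u}) : Ordinal.{u} :=
  max (⨆ x : Set.Iio a, Order.succ (Ordinal.nadd x.1 b))
    (⨆ x : Set.Iio b, Order.succ (Ordinal.nadd a x.1))
termination_by (a, b)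
decreasing_by all_goals cases x; decreasing_tactic

/-- Finite partial natural (Hessenberg) sums. -/
noncomputable def natSumPrefix (γ : ℕ → Ordinal) : ℕ → Ordinal
  | 0 => 0
  | n + 1 => Ordinal.nadd (natSumPrefix γ n) (γ n)

/-- The infinite natural sum. -/
noncomputable def inatSum (γ : ℕ → Ordinal) : Ordinal := ⨆ n : ℕ, natSumPrefix γ n

/-
The natural sum is commutative, associative and monotone, so on a synonym of `Ordinal` it is the
addition of an ordered commutative monoid and the partial sums are finite `Finset` sums. For an
injective `p`, the terms `γ (p 0), …, γ (p (m-1))` are among `γ 0, …, γ (n-1)` for `n` large, and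
adding the remaining terms can only increase the sum; hence `inatSum (γ ∘ p) ≤ inatSum γ`.
Applying this to `p` and its inverse gives equality.
-/

namespace Ordinal

theorem nadd_le_iff (a b c : Ordinal) :
    nadd a b ≤ c ↔ (∀ a' < a, nadd a' b < c) ∧ ∀ b' < b, nadd a b' < c := by
  rw [nadd, max_le_iff, Ordinal.iSup_le_iff, Ordinal.iSup_le_iff]
  simp

theorem lt_nadd_iff (a b c : Ordinal) :
    c < nadd a b ↔ (∃ a' < a, c ≤ nadd a' b) ∨ ∃ b' < b, c ≤ nadd a b' := by
  simpa only [not_le, not_and_or, not_forall, not_lt, exists_prop] using (nadd_le_iff a b c).not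

theorem nadd_left_strictMono (b : Ordinal) : StrictMono (nadd · b) :=
  fun a' a h => ((nadd_le_iff a b _).1 le_rfl).1 a' h

theorem nadd_right_strictMono (a : Ordinal) : StrictMono (nadd a) :=
  fun b' b h => ((nadd_le_iff a b _).1 le_rfl).2 b' h

theorem nadd_comm (a b : Ordinal) : nadd a b = nadd b a := by
  induction a using WellFoundedLT.induction generalizing b with | _ a iha
  induction b using WellFoundedLT.induction with | _ b ihb
  apply le_antisymm
  · rw [nadd_le_iff]
    refine ⟨fun a' h => ?_, fun b' h => ?_⟩
    · rw [iha a' h]; exact nadd_right_strictMono b h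
    · rw [ihb b' h]; exact nadd_left_strictMono a h
  · rw [nadd_le_iff]
    refine ⟨fun b' h => ?_, fun a' h => ?_⟩
    · rw [← ihb b' h]; exact nadd_right_strictMono a h
    · rw [← iha a' h]; exact nadd_left_strictMono b h

theorem nadd_zero (a : Ordinal) : nadd a 0 = a := by
  induction a using WellFoundedLT.induction with | _ a iha
  apply le_antisymm
  · rw [nadd_le_iff]
    refine ⟨fun a' h => ?_, fun b' h => absurd h not_lt_zero⟩
    rwa [iha a' h]
  · refine le_of_forall_lt fun a' h => ?_
    rw [← iha a' h]; exact nadd_left_strictMono 0 h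

theorem nadd_assoc (a b c : Ordinal) : nadd (nadd a b) c = nadd a (nadd b c) := by
  induction a using WellFoundedLT.induction generalizing b c with | _ a iha
  induction b using WellFoundedLT.induction generalizing c with | _ b ihb
  induction c using WellFoundedLT.induction with | _ c ihc
  apply le_antisymm
  · rw [nadd_le_iff]
    refine ⟨fun x h => ?_, fun c' h => ?_⟩
    · rcases (lt_nadd_iff a b x).1 h with ⟨a', ha, hx⟩ | ⟨b', hb, hx⟩
      · refine ((nadd_left_strictMono c).monotone hx).trans_lt ?_
        rw [iha a' ha]; exact nadd_left_strictMono _ ha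
      · refine ((nadd_left_strictMono c).monotone hx).trans_lt ?_
        rw [ihb b' hb]; exact nadd_right_strictMono a (nadd_left_strictMono c hb)
    · rw [ihc c' h]; exact nadd_right_strictMono a (nadd_right_strictMono b h)
  · rw [nadd_le_iff]
    refine ⟨fun a' h => ?_, fun x h => ?_⟩
    · rw [← iha a' h]; exact nadd_left_strictMono c (nadd_left_strictMono b h)
    · rcases (lt_nadd_iff b c x).1 h with ⟨b', hb, hx⟩ | ⟨c', hc, hx⟩
      · refine ((nadd_right_strictMono a).monotone hx).trans_lt ?_
        rw [← ihb b' hb]; exact nadd_left_strictMono c (nadd_right_strictMono a hb)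
      · refine ((nadd_right_strictMono a).monotone hx).trans_lt ?_
        rw [← ihc c' hc]; exact nadd_right_strictMono _ hc

end Ordinal

def NatOrdinal.{u} : Type (u + 1) := Ordinal.{u}

namespace NatOrdinal

noncomputable instance : LinearOrder NatOrdinal := inferInstanceAs (LinearOrder Ordinal)

noncomputable instance : Zero NatOrdinal := ⟨(0 : Ordinal)⟩

noncomputable instance : Add NatOrdinal := ⟨Ordinal.nadd⟩

noncomputable instance : AddCommMonoid NatOrdinal where
  add_assoc := Ordinal.nadd_assoc
  zero_add a := (Ordinal.nadd_comm _ _).trans (Ordinal.nadd_zero a)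
  add_zero := Ordinal.nadd_zero
  add_comm := Ordinal.nadd_comm
  nsmul := nsmulRec

instance : IsOrderedAddMonoid NatOrdinal where
  add_le_add_left _ _ h c := (Ordinal.nadd_left_strictMono c).monotone h

end NatOrdinal

def Ordinal.toNatOrdinal : Ordinal ≃o NatOrdinal := OrderIso.refl _

theorem toNatOrdinal_natSumPrefix (γ : ℕ → Ordinal) (n : ℕ) :
    Ordinal.toNatOrdinal (natSumPrefix γ n) = ∑ i ∈ Finset.range n, Ordinal.toNatOrdinal (γ i) := by
  induction n with
  | zero => rfl
  | succ n ih => rw [Finset.sum_range_succ, ← ih]; rfl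

theorem natSumPrefix_comp_le_of_injective (γ : ℕ → Ordinal) {p : ℕ → ℕ}
    (hp : p.Injective) (m : ℕ) : ∃ n, natSumPrefix (γ ∘ p) m ≤ natSumPrefix γ n := by
  obtain ⟨n, hn⟩ : ∃ n, (Finset.range m).image p ⊆ Finset.range n := by
    obtain ⟨b, hb⟩ := ((Finset.range m).image p).bddAbove
    exact ⟨b + 1, fun x hx => Finset.mem_range.2 (Nat.lt_succ_of_le (hb hx))⟩
  refine ⟨n, Ordinal.toNatOrdinal.le_iff_le.1 ?_⟩
  rw [toNatOrdinal_natSumPrefix, toNatOrdinal_natSumPrefix]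
  calc ∑ i ∈ Finset.range m, Ordinal.toNatOrdinal (γ (p i))
      = ∑ j ∈ (Finset.range m).image p, Ordinal.toNatOrdinal (γ j) :=
        (Finset.sum_image hp.injOn).symm
    _ ≤ ∑ j ∈ Finset.range n, Ordinal.toNatOrdinal (γ j) :=
        Finset.sum_le_sum_of_subset_of_nonneg hn fun j _ _ => zero_le (a := γ j)

theorem inatSum_comp_le_of_injective (γ : ℕ → Ordinal) {p : ℕ → ℕ} (hp : p.Injective) :
    inatSum (γ ∘ p) ≤ inatSum γ :=
  Ordinal.iSup_le fun m =>
    let ⟨n, hn⟩ := natSumPrefix_comp_le_of_injective γ hp m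
    hn.trans (Ordinal.le_iSup (natSumPrefix γ) n)

/-- The infinite natural sum is invariant under permutations of the terms. -/
theorem inatSum_perm_invariant (γ : ℕ → Ordinal) (p : ℕ → ℕ)
    (hp : Function.Bijective p) : inatSum γ = inatSum fun i => γ (p i) := by
  let e := Equiv.ofBijective p hp
  refine le_antisymm ?_ (inatSum_comp_le_of_injective γ hp.injective)
  calc inatSum γ = inatSum ((γ ∘ p) ∘ e.symm) := by
        congr 1; funext i; exact congrArg γ (e.apply_symm_apply i).symm
    _ ≤ inatSum (γ ∘ p) := inatSum_comp_le_of_injective _ e.symm.injective
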